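/- arXiv:math/0701599 — 2 statements merged into one kernel-verified Lean document; each statement's English description precedes it below -/
import Mathlib

section
/- Let H be a real separable Hilbert space and let S(t), t ≥ 0, be a semigroup of maps of H satisfying assumptions (i) and (ii) below, with absorbing ball B_ρ and weak universal attractor A = ⋂_{s ≥ 0} cl_w(⋃_{t ≥ s} S(t) B_ρ). Then A attracts all bounded sets of H in the weak topology: for every bounded set B ⊆ H and every set O ⊆ H that is open in the weak topology of H and contains A, there exists t₁ ≥ 0 such that S(t) B ⊆ O for all t ≥ t₁. -/
/-!
Through the Riesz representation the weak topology of `H` is the weak-* topology of its dual, so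
by Banach–Alaoglu the ball `B_ρ` is weakly compact. The tails `⋃_{t ≥ s} S t '' B_ρ` decrease in
`s` and eventually lie in `B_ρ`; their weak closures meet in `A`, so by compactness of
`B_ρ \ O` some tail already lies in the weakly open `O ⊇ A`. Absorption and the semigroup law
carry `S t '' B` into that tail for all large `t`.
-/

/-- The weak topology on a real normed space `H`: the initial (coarsest) topology
making every continuous linear functional `f : H →L[ℝ] ℝ` continuous. -/
def weakTopology (H : Type*) [NormedAddCommGroup H] [NormedSpace ℝ H] :
    TopologicalSpace H :=
  ⨅ f : H →L[ℝ] ℝ, TopologicalSpace.induced (f : H → ℝ) inferInstance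

open Metric Set

theorem IsCompact.exists_subset_of_iInter_closure_subset {X ι : Type*} [TopologicalSpace X]
    [Preorder ι] [IsDirected ι (· ≤ ·)] {K O : Set X} {T : ι → Set X} (hK : IsCompact K)
    (hT : Antitone T) (hTK : ∃ i, T i ⊆ K) (hO : IsOpen O) (hTO : ⋂ i, closure (T i) ⊆ O) :
    ∃ i, T i ⊆ O := by
  obtain ⟨i₀, hi₀⟩ := hTK
  have : Nonempty ι := ⟨i₀⟩
  obtain ⟨i, hi⟩ := (hK.diff hO).elim_directed_family_closed (fun i => closure (T i))
    (fun _ => isClosed_closure)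
    (eq_empty_of_forall_notMem fun _ ⟨⟨_, hxO⟩, hx⟩ => hxO (hTO hx))
    (hT.directed_ge.mono_comp (g := closure) _ fun _ _ => closure_mono)
  obtain ⟨j, hji, hji₀⟩ := exists_ge_ge i i₀
  refine ⟨j, fun x hx => by_contra fun hxO => ?_⟩
  exact hi.subset ⟨⟨hi₀ (hT hji₀ hx), hxO⟩, subset_closure (hT hji hx)⟩

section Hilbert

variable {H : Type*} [NormedAddCommGroup H] [InnerProductSpace ℝ H] [CompleteSpace H]

theorem weakTopology_eq_induced_toDual :
    weakTopology H =
      .induced (fun u => StrongDual.toWeakDual (InnerProductSpace.toDual ℝ H u)) inferInstance := by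
  apply le_antisymm
  · rw [← continuous_iff_le_induced]
    refine @WeakDual.continuous_of_continuous_eval H ℝ H _ _ _ _ _ _ _ (weakTopology H) _
      fun y => ?_
    have hy : (fun u => StrongDual.toWeakDual (InnerProductSpace.toDual ℝ H u) y) =
        InnerProductSpace.toDual ℝ H y := funext fun u => real_inner_comm y u
    exact hy ▸ continuous_iInf_dom continuous_induced_dom
  · refine le_iInf fun f => ?_
    obtain ⟨y, rfl⟩ := (InnerProductSpace.toDual ℝ H).surjective f
    have hy : ⇑(InnerProductSpace.toDual ℝ H y) =
        (fun f : WeakDual ℝ H => f y) ∘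
          fun u => StrongDual.toWeakDual (InnerProductSpace.toDual ℝ H u) :=
      funext fun u => real_inner_comm u y
    rw [hy, ← induced_compose]
    exact induced_mono (WeakDual.eval_continuous y).le_induced

theorem isCompact_closedBall_weakTopology (x : H) (ρ : ℝ) :
    @IsCompact H (weakTopology H) (closedBall x ρ) := by
  have hball := (InnerProductSpace.toDual ℝ H).toIsometryEquiv.image_closedBall x ρ
  rw [LinearIsometryEquiv.coe_toIsometryEquiv] at hball
  rw [@Topology.IsInducing.isCompact_iff _ _ (weakTopology H) _ _ _
    (@Topology.IsInducing.mk _ _ (weakTopology H) _ _ weakTopology_eq_induced_toDual),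
    ← image_image, hball, StrongDual.toWeakDual.image_eq_preimage_symm]
  exact WeakDual.isCompact_closedBall _ ρ

end Hilbert

section Semigroup

variable {X : Type*} {S : ℝ → X → X} {K : Set X}

def orbitTail (S : ℝ → X → X) (K : Set X) (s : ℝ) : Set X :=
  ⋃ t ∈ Ici s, S t '' K

theorem orbitTail_antitone : Antitone (orbitTail S K) :=
  fun _ _ h => biUnion_subset_biUnion_left (Ici_subset_Ici.2 h)

theorem orbitTail_subset_of_absorbs {K' : Set X} {t₀ : ℝ}
    (h : ∀ t, t₀ ≤ t → S t '' K ⊆ K') : orbitTail S K t₀ ⊆ K' :=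
  iUnion₂_subset h

theorem image_subset_orbitTail (hSadd : ∀ s t : ℝ, 0 ≤ s → 0 ≤ t → S (t + s) = S t ∘ S s)
    {B : Set X} {t₀ s t : ℝ} (ht₀ : 0 ≤ t₀) (hB : S t₀ '' B ⊆ K) (hs : 0 ≤ s)
    (ht : t₀ + s ≤ t) : S t '' B ⊆ orbitTail S K s := by
  rintro _ ⟨b, hb, rfl⟩
  have hsplit : S t b = S (t - t₀) (S t₀ b) := by
    simpa using congrFun (hSadd t₀ (t - t₀) ht₀ (by linarith)) b
  exact mem_biUnion (show s ≤ t - t₀ by linarith) ⟨_, hB ⟨b, hb, rfl⟩, hsplit.symm⟩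

end Semigroup

theorem weak_universal_attractor_attracts_general
    {H : Type*} [NormedAddCommGroup H] [InnerProductSpace ℝ H] [CompleteSpace H]
    (S : ℝ → H → H)
    (hSadd : ∀ s t : ℝ, 0 ≤ s → 0 ≤ t → S (t + s) = S t ∘ S s)
    (ρ : ℝ)
    (habs : ∀ B : Set H, Bornology.IsBounded B →
      ∃ t₀ : ℝ, 0 ≤ t₀ ∧ ∀ t : ℝ, t₀ ≤ t → S t '' B ⊆ Metric.closedBall 0 ρ)
    (A : Set H)
    (hA : A = ⋂ s ∈ Set.Ici (0 : ℝ),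
      @closure H (weakTopology H) (⋃ t ∈ Set.Ici s, S t '' Metric.closedBall 0 ρ)) :
    ∀ B : Set H, Bornology.IsBounded B →
      ∀ O : Set H, @IsOpen H (weakTopology H) O → A ⊆ O →
        ∃ t₁ : ℝ, 0 ≤ t₁ ∧ ∀ t : ℝ, t₁ ≤ t → S t '' B ⊆ O := by
  intro B hB O hO hAO
  obtain ⟨tB, htB, hBρ⟩ := habs B hB
  obtain ⟨tρ, -, hρρ⟩ := habs (closedBall 0 ρ) isBounded_closedBall
  have hlim : ⋂ s, @closure H (weakTopology H) (orbitTail S (closedBall 0 ρ) s) ⊆ O :=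
    fun x hx => hAO (hA ▸ mem_iInter₂.2 fun s _ => mem_iInter.1 hx s)
  obtain ⟨s, hsO⟩ := @IsCompact.exists_subset_of_iInter_closure_subset H ℝ (weakTopology H) _ _
    _ O _ (isCompact_closedBall_weakTopology 0 ρ) orbitTail_antitone
    ⟨tρ, orbitTail_subset_of_absorbs hρρ⟩ hO hlim
  refine ⟨tB + max s 0, add_nonneg htB (le_max_right s 0), fun t ht => ?_⟩
  calc S t '' B ⊆ orbitTail S (closedBall 0 ρ) (max s 0) :=
        image_subset_orbitTail hSadd htB (hBρ tB le_rfl) (le_max_right s 0) ht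
    _ ⊆ orbitTail S (closedBall 0 ρ) s := orbitTail_antitone (le_max_left s 0)
    _ ⊆ O := hsO

/-- Let `H` be a real separable Hilbert space and `S t`, `t ≥ 0`, a semigroup of
maps of `H` such that each `S t` is sequentially weakly continuous, admitting an
absorbing closed ball `B_ρ`.  Then the weak universal attractor
`A = ⋂_{s ≥ 0} cl_w (⋃_{t ≥ s} S t '' B_ρ)` attracts all bounded sets of `H` in
the weak topology: for every bounded `B ⊆ H` and every weakly open `O ⊇ A`
there is `t₁ ≥ 0` with `S t '' B ⊆ O` for all `t ≥ t₁`. -/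
theorem weak_universal_attractor_attracts
    {H : Type*} [NormedAddCommGroup H] [InnerProductSpace ℝ H] [CompleteSpace H]
    [TopologicalSpace.SeparableSpace H]
    (S : ℝ → H → H)
    (hS0 : S 0 = id)
    (hSadd : ∀ s t : ℝ, 0 ≤ s → 0 ≤ t → S (t + s) = S t ∘ S s)
    (hSweak : ∀ t : ℝ, 0 ≤ t → ∀ (u : ℕ → H) (x : H),
      Filter.Tendsto u Filter.atTop (@nhds H (weakTopology H) x) →
      Filter.Tendsto (fun n => S t (u n)) Filter.atTop (@nhds H (weakTopology H) (S t x)))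
    (ρ : ℝ) (hρ : 0 < ρ)
    (habs : ∀ B : Set H, Bornology.IsBounded B →
      ∃ t₀ : ℝ, 0 ≤ t₀ ∧ ∀ t : ℝ, t₀ ≤ t → S t '' B ⊆ Metric.closedBall 0 ρ)
    (A : Set H)
    (hA : A = ⋂ s ∈ Set.Ici (0 : ℝ),
      @closure H (weakTopology H) (⋃ t ∈ Set.Ici s, S t '' Metric.closedBall 0 ρ)) :
    ∀ B : Set H, Bornology.IsBounded B →
      ∀ O : Set H, @IsOpen H (weakTopology H) O → A ⊆ O →
        ∃ t₁ : ℝ, 0 ≤ t₁ ∧ ∀ t : ℝ, t₁ ≤ t → S t '' B ⊆ O :=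
  weak_universal_attractor_attracts_general S hSadd ρ habs A hA
end

section
/- Let H be a real separable Hilbert space and let S(t), t ≥ 0, be a semigroup of maps of H satisfying assumptions (i) and (ii) below, with absorbing ball B_ρ and weak universal attractor A = ⋂_{s ≥ 0} cl_w(⋃_{t ≥ s} S(t) B_ρ). The weak universal attractor is unique in the following sense: if K ⊆ H is bounded, closed in the weak topology of H, invariant (S(t) K = K for every t ≥ 0), and attracts all bounded sets of H in the weak topology (for every bounded B ⊆ H and every weakly open O ⊇ K there exists t₁ ≥ 0 with S(t) B ⊆ O for all t ≥ t₁), then K = A. -/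
open Set Filter Topology omegaLimit

theorem weakTopology_eq_weakSpace (H : Type*) [NormedAddCommGroup H] [NormedSpace ℝ H] :
    weakTopology H = (inferInstance : TopologicalSpace (WeakSpace ℝ H)) := by
  show _ = TopologicalSpace.induced (fun (x : H) (f : H →L[ℝ] ℝ) => f x) Pi.topologicalSpace
  rw [weakTopology, Pi.topologicalSpace, induced_iInf]
  simp only [induced_compose]
  rfl

section OmegaLimit

variable {τ α β : Type*} [TopologicalSpace β]

theorem omegaLimit_atTop_eq_biInter_Ici [SemilatticeSup τ] (ϕ : τ → α → β) (s : Set α) (t₀ : τ) :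
    ω⁺ ϕ s = ⋂ a ∈ Ici t₀, closure (⋃ t ∈ Ici a, ϕ t '' s) := by
  have : Nonempty τ := ⟨t₀⟩
  simp only [iUnion_image_left]
  refine (subset_iInter₂ fun a _ => omegaLimit_subset_closure_image2 _ _ _ (Ici_mem_atTop a))
    |>.antisymm (subset_iInter₂ fun u hu => ?_)
  obtain ⟨a, ha⟩ := mem_atTop_sets.1 hu
  exact (biInter_subset_of_mem (le_sup_right : t₀ ≤ a ⊔ t₀)).trans
    (closure_mono (image2_subset_right fun t ht => ha t (le_sup_left.trans ht)))

theorem subset_omegaLimit_of_eventually_subset_image {f : Filter τ} [f.NeBot] {ϕ : τ → β → β}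
    {s : Set β} (h : ∀ᶠ t in f, s ⊆ ϕ t '' s) : s ⊆ ω f ϕ s := by
  refine subset_iInter₂ fun u hu => ?_
  obtain ⟨t, htu, hst⟩ := ((eventually_mem_set.2 hu).and h).exists
  exact hst.trans ((image_subset_image2_right htu).trans subset_closure)

theorem omegaLimit_subset_of_attracts [RegularSpace β] {f : Filter τ} {ϕ : τ → α → β}
    {s : Set α} {K : Set β} (hK : IsClosed K)
    (hattr : ∀ O, IsOpen O → K ⊆ O → ∀ᶠ t in f, ϕ t '' s ⊆ O) : ω f ϕ s ⊆ K := by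
  intro y hy
  by_contra hyK
  obtain ⟨C, hC, hCclosed, hCK⟩ :=
    exists_mem_nhds_isClosed_subset (hK.isOpen_compl.mem_nhds hyK)
  have hfreq := (mem_omegaLimit_iff_frequently₂ f ϕ s y).1 hy C hC
  have hev := hattr Cᶜ hCclosed.isOpen_compl fun x hxK hxC => hCK hxC hxK
  obtain ⟨t, ⟨z, hzϕ, hzC⟩, hϕC⟩ := (hfreq.and_eventually hev).exists
  exact hϕC hzϕ hzC

end OmegaLimit

theorem weak_universal_attractor_unique_general
    {H : Type*} [NormedAddCommGroup H] [InnerProductSpace ℝ H]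
    (S : ℝ → H → H)
    (ρ : ℝ)
    (habs : ∀ B : Set H, Bornology.IsBounded B →
      ∃ t₀ : ℝ, 0 ≤ t₀ ∧ ∀ t : ℝ, t₀ ≤ t → S t '' B ⊆ Metric.closedBall 0 ρ)
    (A : Set H)
    (hA : A = ⋂ s ∈ Set.Ici (0 : ℝ),
      @closure H (weakTopology H) (⋃ t ∈ Set.Ici s, S t '' Metric.closedBall 0 ρ))
    (K : Set H)
    (hKbdd : Bornology.IsBounded K)
    (hKclosed : @IsClosed H (weakTopology H) K)
    (hKinv : ∀ t : ℝ, 0 ≤ t → S t '' K = K)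
    (hKattracts : ∀ B : Set H, Bornology.IsBounded B →
      ∀ O : Set H, @IsOpen H (weakTopology H) O → K ⊆ O →
        ∃ t₁ : ℝ, 0 ≤ t₁ ∧ ∀ t : ℝ, t₁ ≤ t → S t '' B ⊆ O) :
    K = A := by
  rw [weakTopology_eq_weakSpace] at hA hKclosed hKattracts
  replace hA : A = omegaLimit (β := WeakSpace ℝ H) atTop S (Metric.closedBall 0 ρ) :=
    hA.trans (omegaLimit_atTop_eq_biInter_Ici (β := WeakSpace ℝ H) _ _ (0 : ℝ)).symm
  subst hA
  obtain ⟨t₀, ht₀, hK_to_ball⟩ := habs K hKbdd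
  have hK_ball : K ⊆ Metric.closedBall 0 ρ :=
    (hKinv t₀ ht₀).superset.trans (hK_to_ball t₀ le_rfl)
  refine subset_antisymm ?_ (omegaLimit_subset_of_attracts hKclosed fun O hO hKO => ?_)
  · have hK_omega : K ⊆ omegaLimit (β := WeakSpace ℝ H) atTop S K :=
      subset_omegaLimit_of_eventually_subset_image (β := WeakSpace ℝ H)
        ((eventually_ge_atTop 0).mono fun t ht => (hKinv t ht).superset)
    exact hK_omega.trans (omegaLimit_mono_right _ _ hK_ball)
  · obtain ⟨t₁, -, hattr⟩ := hKattracts _ Metric.isBounded_closedBall O hO hKO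
    exact eventually_atTop.2 ⟨t₁, hattr⟩

/-- Uniqueness of the weak universal attractor: if `K ⊆ H` is bounded, weakly
closed, invariant under the semigroup, and attracts all bounded sets of `H` in
the weak topology, then `K` coincides with the weak universal attractor
`A = ⋂_{s ≥ 0} cl_w (⋃_{t ≥ s} S t '' B_ρ)`. -/
theorem weak_universal_attractor_unique
    {H : Type*} [NormedAddCommGroup H] [InnerProductSpace ℝ H] [CompleteSpace H]
    [TopologicalSpace.SeparableSpace H]
    (S : ℝ → H → H)
    (hS0 : S 0 = id)
    (hSadd : ∀ s t : ℝ, 0 ≤ s → 0 ≤ t → S (t + s) = S t ∘ S s)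
    (hSweak : ∀ t : ℝ, 0 ≤ t → ∀ (u : ℕ → H) (x : H),
      Filter.Tendsto u Filter.atTop (@nhds H (weakTopology H) x) →
      Filter.Tendsto (fun n => S t (u n)) Filter.atTop (@nhds H (weakTopology H) (S t x)))
    (ρ : ℝ) (hρ : 0 < ρ)
    (habs : ∀ B : Set H, Bornology.IsBounded B →
      ∃ t₀ : ℝ, 0 ≤ t₀ ∧ ∀ t : ℝ, t₀ ≤ t → S t '' B ⊆ Metric.closedBall 0 ρ)
    (A : Set H)
    (hA : A = ⋂ s ∈ Set.Ici (0 : ℝ),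
      @closure H (weakTopology H) (⋃ t ∈ Set.Ici s, S t '' Metric.closedBall 0 ρ))
    (K : Set H)
    (hKbdd : Bornology.IsBounded K)
    (hKclosed : @IsClosed H (weakTopology H) K)
    (hKinv : ∀ t : ℝ, 0 ≤ t → S t '' K = K)
    (hKattracts : ∀ B : Set H, Bornology.IsBounded B →
      ∀ O : Set H, @IsOpen H (weakTopology H) O → K ⊆ O →
        ∃ t₁ : ℝ, 0 ≤ t₁ ∧ ∀ t : ℝ, t₁ ≤ t → S t '' B ⊆ O) :
    K = A :=
  weak_universal_attractor_unique_general S ρ habs A hA K hKbdd hKclosed hKinv hKattracts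
end
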